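/- arXiv:1805.06693 — 4 statements merged into one kernel-verified Lean document; each statement's English description precedes it below -/
import Mathlib

section
/- For a rooted tree G=(V,E), the set conv(Z), where Z = { z ∈ {0,1}^V : z_v z_{v'} = 0 for all v ∈ V and all ancestors v' of v }, equals { γ ∈ [0,1]^V : for every v ∈ V, the sum of γ_{v'} over v' in the set consisting of v and all its ancestors is at most 1 }. -/
/-!
Give vertex `v` the interval `[∑_{A(v)} γ, ∑_{Ā(v)} γ) ⊆ [0, 1]`, of length `γ v`; along
any root-to-leaf path these intervals are consecutive, hence disjoint. For a threshold `t`
uniform in `[0, 1]`, the vertices whose interval contains `t` therefore form an admissible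
activation, and its expectation is `γ`. Jensen's inequality for the closed convex set
`conv(Z)` puts `γ` in it. The reverse inclusion holds because the polytope is convex and
contains `Z`.
-/

open Finset

def ancestors {n : ℕ} [NeZero n] (par : Fin n → Fin n) (hpar : ∀ v, v ≠ 0 → par v < v) :
    Fin n → Finset (Fin n) :=
  fun v =>
    if h : v = 0 then ∅ else insert (par v) (ancestors par hpar (par v))
termination_by v => (v : ℕ)
decreasing_by exact hpar _ h

/-- `v` together with its strict ancestors. -/
def barA {n : ℕ} [NeZero n] (par : Fin n → Fin n) (hpar : ∀ v, v ≠ 0 → par v < v)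
    (v : Fin n) : Finset (Fin n) :=
  insert v (ancestors par hpar v)

/-- `v` together with its descendants. -/
def barD {n : ℕ} [NeZero n] (par : Fin n → Fin n) (hpar : ∀ v, v ≠ 0 → par v < v)
    (v : Fin n) : Finset (Fin n) :=
  Finset.univ.filter (fun w => v ∈ barA par hpar w)

/-- strict descendants of `v`. -/
def strictD {n : ℕ} [NeZero n] (par : Fin n → Fin n) (hpar : ∀ v, v ≠ 0 → par v < v)
    (v : Fin n) : Finset (Fin n) :=
  Finset.univ.filter (fun w => v ∈ ancestors par hpar w)

/-- children of `v`. -/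
def children {n : ℕ} [NeZero n] (par : Fin n → Fin n) (v : Fin n) : Finset (Fin n) :=
  Finset.univ.filter (fun w => w ≠ 0 ∧ par w = v)

open MeasureTheory in
theorem sub_mem_convexHull_range_indicator_Ico {ι : Type*} [Fintype ι] (a b : ι → ℝ)
    (ha : ∀ i, 0 ≤ a i) (hab : ∀ i, a i ≤ b i) (hb : ∀ i, b i ≤ 1) :
    b - a ∈ convexHull ℝ
      (Set.range fun t : ℝ => fun i => (Set.Ico (a i) (b i)).indicator 1 t) := by
  set χ : ℝ → ι → ℝ := fun t i => (Set.Ico (a i) (b i)).indicator 1 t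
  set μ : Measure ℝ := volume.restrict (Set.Icc 0 1)
  have : IsProbabilityMeasure μ := ⟨by simp [μ]⟩
  have hχ : ∀ i, Integrable (χ · i) μ := fun i =>
    (integrable_const (1 : ℝ)).indicator measurableSet_Ico
  have hrange : (Set.range χ).Finite := by
    refine (Set.Finite.pi' fun _ => ({0, 1} : Set ℝ).toFinite).subset ?_
    rintro _ ⟨t, rfl⟩ i
    by_cases h : t ∈ Set.Ico (a i) (b i) <;> simp [χ, h]
  have hmean : ∫ t, χ t ∂μ = b - a := by
    ext i
    rw [eval_integral hχ, integral_indicator_one measurableSet_Ico,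
      measureReal_restrict_apply measurableSet_Ico,
      Set.inter_eq_left.2 (Set.Ico_subset_Icc_self.trans (Set.Icc_subset_Icc (ha i) (hb i))),
      Real.volume_real_Ico_of_le (hab i), Pi.sub_apply]
  rw [← hmean]
  exact (convex_convexHull ℝ _).integral_mem (hrange.isClosed_convexHull (𝕜 := ℝ))
    (ae_of_all _ fun t => subset_convexHull ℝ _ (Set.mem_range_self t)) (Integrable.of_eval hχ)

theorem convex_setOf_unitCube_sum_le_one {ι κ : Type*} (s : κ → Finset ι) :
    Convex ℝ {γ : ι → ℝ | (∀ i, 0 ≤ γ i ∧ γ i ≤ 1) ∧ ∀ k, ∑ i ∈ s k, γ i ≤ 1} := by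
  rintro x ⟨hx, hxs⟩ y ⟨hy, hys⟩ a b ha hb hab
  refine ⟨fun i => ?_, fun k => ?_⟩
  · simp only [Pi.add_apply, Pi.smul_apply, smul_eq_mul]
    obtain ⟨hx0, hx1⟩ := hx i
    obtain ⟨hy0, hy1⟩ := hy i
    constructor <;> nlinarith
  · simp only [Pi.add_apply, Pi.smul_apply, smul_eq_mul, sum_add_distrib, ← mul_sum]
    nlinarith [hxs k, hys k]

section Tree

variable {n : ℕ} [NeZero n] (par : Fin n → Fin n) (hpar : ∀ v, v ≠ 0 → par v < v)

theorem ancestors_of_ne_zero {v : Fin n} (hv : v ≠ 0) :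
    ancestors par hpar v = barA par hpar (par v) := by
  rw [ancestors, dif_neg hv]; rfl

theorem ancestors_zero : ancestors par hpar 0 = ∅ := by
  rw [ancestors, dif_pos rfl]

theorem mem_ancestors {v w : Fin n} :
    w ∈ ancestors par hpar v ↔ v ≠ 0 ∧ w ∈ barA par hpar (par v) := by
  by_cases hv : v = 0
  · simp [hv, ancestors_zero]
  · simp [hv, ancestors_of_ne_zero par hpar hv]

theorem lt_of_mem_ancestors {v w : Fin n} (h : w ∈ ancestors par hpar v) : w < v := by
  induction v using WellFoundedLT.induction with
  | ind v ih =>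
    obtain ⟨hv, hw⟩ := (mem_ancestors par hpar).1 h
    rcases mem_insert.1 hw with rfl | hw
    · exact hpar v hv
    · exact (ih _ (hpar v hv) hw).trans (hpar v hv)

theorem notMem_ancestors_self (v : Fin n) : v ∉ ancestors par hpar v :=
  fun h => (lt_of_mem_ancestors par hpar h).false

theorem barA_subset_ancestors {v w : Fin n} (h : w ∈ ancestors par hpar v) :
    barA par hpar w ⊆ ancestors par hpar v := by
  induction v using WellFoundedLT.induction with
  | ind v ih =>
    obtain ⟨hv, hw⟩ := (mem_ancestors par hpar).1 h
    rw [ancestors_of_ne_zero par hpar hv]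
    rcases mem_insert.1 hw with rfl | hw
    · rfl
    · exact (ih _ (hpar v hv) hw).trans (subset_insert _ _)

theorem sum_barA_eq_add_sum_ancestors {M : Type*} [AddCommMonoid M] (f : Fin n → M)
    (v : Fin n) :
    ∑ w ∈ barA par hpar v, f w = f v + ∑ w ∈ ancestors par hpar v, f w :=
  sum_insert (notMem_ancestors_self par hpar v)

theorem sum_barA_le_sum_ancestors {γ : Fin n → ℝ} (hγ : ∀ v, 0 ≤ γ v) {v w : Fin n}
    (h : w ∈ ancestors par hpar v) :
    ∑ u ∈ barA par hpar w, γ u ≤ ∑ u ∈ ancestors par hpar v, γ u :=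
  sum_le_sum_of_subset_of_nonneg (barA_subset_ancestors par hpar h) fun u _ _ => hγ u

def admissibleActivations : Set (Fin n → ℝ) :=
  {z | (∀ v, z v = 0 ∨ z v = 1) ∧ ∀ v, ∀ w ∈ ancestors par hpar v, z v * z w = 0}

theorem indicator_Ico_mem_admissibleActivations {γ : Fin n → ℝ} (hγ : ∀ v, 0 ≤ γ v)
    (t : ℝ) :
    (fun v => (Set.Ico (∑ w ∈ ancestors par hpar v, γ w)
      (∑ w ∈ barA par hpar v, γ w)).indicator 1 t) ∈ admissibleActivations par hpar := by
  refine ⟨fun v => ?_, fun v w hw => ?_⟩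
  · by_cases ht : t ∈ Set.Ico (∑ w ∈ ancestors par hpar v, γ w) (∑ w ∈ barA par hpar v, γ w)
    <;> simp [ht]
  · by_contra hne
    obtain ⟨htv, htw⟩ := mul_ne_zero_iff.1 hne
    linarith [(Set.indicator_apply_ne_zero.1 htv).1.1, (Set.indicator_apply_ne_zero.1 htw).1.2,
      sum_barA_le_sum_ancestors par hpar hγ hw]

theorem sum_barA_le_one_of_mem_admissibleActivations {z : Fin n → ℝ}
    (hz : z ∈ admissibleActivations par hpar) (v : Fin n) :
    ∑ w ∈ barA par hpar v, z w ≤ 1 := by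
  obtain ⟨h01, hz⟩ := hz
  induction v using WellFoundedLT.induction with
  | ind v ih =>
    rw [sum_barA_eq_add_sum_ancestors]
    rcases h01 v with hv | hv
    · by_cases hv0 : v = 0
      · subst hv0
        simp [hv, ancestors_zero]
      · rw [hv, zero_add, ancestors_of_ne_zero par hpar hv0]
        exact ih _ (hpar v hv0)
    · have hanc : ∀ w ∈ ancestors par hpar v, z w = 0 := fun w hw => by
        simpa [hv] using hz v w hw
      simp [hv, sum_eq_zero hanc]

end Tree

/-- The convex hull of the set `Z` of 0/1 activation vectors with no two beams in an
ancestor–descendant relation simultaneously active equals the polytope of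
`γ ∈ [0,1]^V` with `∑_{v' ∈ Ā(v)} γ_{v'} ≤ 1` for all `v`. -/
theorem convexHull_admissible_activations {n : ℕ} [NeZero n] (par : Fin n → Fin n)
    (hpar : ∀ v, v ≠ 0 → par v < v) :
    convexHull ℝ
      {z : Fin n → ℝ | (∀ v, z v = 0 ∨ z v = 1) ∧
        ∀ v, ∀ v' ∈ ancestors par hpar v, z v * z v' = 0} =
    {γ : Fin n → ℝ | (∀ v, 0 ≤ γ v ∧ γ v ≤ 1) ∧
        ∀ v, ∑ v' ∈ barA par hpar v, γ v' ≤ 1} := by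
  change convexHull ℝ (admissibleActivations par hpar) = _
  refine subset_antisymm (convexHull_min ?_ (convex_setOf_unitCube_sum_le_one _)) ?_
  · intro z hz
    refine ⟨fun v => ?_, sum_barA_le_one_of_mem_admissibleActivations par hpar hz⟩
    rcases hz.1 v with h | h <;> simp [h]
  · rintro γ ⟨hγ, hsum⟩
    have hγ0 : ∀ v, 0 ≤ γ v := fun v => (hγ v).1
    have hγ_eq : γ = (fun v => ∑ w ∈ barA par hpar v, γ w) -
        fun v => ∑ w ∈ ancestors par hpar v, γ w := by
      ext v
      simp [sum_barA_eq_add_sum_ancestors]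
    rw [hγ_eq]
    refine convexHull_mono (Set.range_subset_iff.2 fun t =>
      indicator_Ico_mem_admissibleActivations par hpar hγ0 t) ?_
    exact sub_mem_convexHull_range_indicator_Ico _ _ (fun v => sum_nonneg fun w _ => hγ0 w)
      (fun v => by simp [sum_barA_eq_add_sum_ancestors, hγ0]) hsum
end

section
/- Let G be a finite rooted tree and define the per-state weight π̃(n) = ∏_{v∈V} ρ_v^{n_v} · C(∑_{v'∈D̄(v)} n_{v'}, n_v) for n ∈ ℕ^V. Then for every n ∈ ℕ^V and every v ∈ V, π̃(n + e^v)/π̃(n) = ρ_v / γ_v(n + e^v), where γ_v(m) = (m_v / ∑_{v'∈D̄(v)} m_{v'}) · ∏_{v''∈A(v)} (∑_{v'∈D(v'')} m_{v'} / ∑_{v'∈D̄(v'')} m_{v'}), i.e., the detailed-balance ratio for the proportional-fair allocation holds. -/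
open Finset

theorem anc_lt {nn : ℕ} [NeZero nn] (par : Fin nn → Fin nn)
    (hpar : ∀ v, v ≠ 0 → par v < v) (v u : Fin nn)
    (hu : u ∈ ancestors par hpar v) : u < v := by
  rw [ancestors] at hu
  by_cases h : v = 0
  · simp [h] at hu
  · rw [dif_neg h] at hu
    rcases Finset.mem_insert.1 hu with h1 | h1
    · exact h1 ▸ hpar v h
    · exact (anc_lt par hpar (par v) u h1).trans (hpar v h)
termination_by (v : ℕ)
decreasing_by exact hpar _ h

/-- Detailed balance for the PF allocation: with
`π̃(m) = ∏_v ρ_v^{m_v} C(∑_{v' ∈ barD(v)} m_{v'}, m_v)` and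
`γ_v(m) = (m_v / ∑_{barD(v)} m) ∏_{v'' ∈ A(v)} (∑_{D(v'')} m / ∑_{barD(v'')} m)`,
one has `π̃(m + e^v)/π̃(m) = ρ_v / γ_v(m + e^v)`. -/
theorem pf_detailed_balance_ratio {nn : ℕ} [NeZero nn] (par : Fin nn → Fin nn)
    (hpar : ∀ v, v ≠ 0 → par v < v) (ρ : Fin nn → ℝ) (hρ : ∀ v, 0 < ρ v)
    (m : Fin nn → ℕ) (v : Fin nn) :
    let pitilde : (Fin nn → ℕ) → ℝ := fun q =>
      ∏ w, ρ w ^ q w * ((∑ w' ∈ barD par hpar w, q w').choose (q w) : ℝ)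
    let γv : (Fin nn → ℕ) → ℝ := fun q =>
      ((q v : ℝ) / ∑ w' ∈ barD par hpar v, (q w' : ℝ)) *
        ∏ w ∈ ancestors par hpar v,
          ((∑ w' ∈ strictD par hpar w, (q w' : ℝ)) / ∑ w' ∈ barD par hpar w, (q w' : ℝ))
    let m' : Fin nn → ℕ := fun w => m w + (if w = v then 1 else 0)
    pitilde m' / pitilde m = ρ v / γv m' := by
  intro pitilde γv m'
  classical
  have hpit : ∀ q : Fin nn → ℕ, pitilde q =
      ∏ w, ρ w ^ q w * ((∑ w' ∈ barD par hpar w, q w').choose (q w) : ℝ) := fun _ => rfl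
  have hγdef : γv m' =
      ((m' v : ℝ) / ∑ w' ∈ barD par hpar v, (m' w' : ℝ)) *
        ∏ w ∈ ancestors par hpar v,
          ((∑ w' ∈ strictD par hpar w, (m' w' : ℝ)) / ∑ w' ∈ barD par hpar w, (m' w' : ℝ)) := rfl
  have hm'v : m' v = m v + 1 := by simp [m']
  have hm'ne : ∀ w : Fin nn, w ≠ v → m' w = m w := by intro w hw; simp [m', hw]
  have hancne : ∀ w ∈ ancestors par hpar v, w ≠ v :=
    fun w hw => ne_of_lt (anc_lt par hpar v w hw)
  have hvanc : v ∉ ancestors par hpar v := fun h => lt_irrefl v (anc_lt par hpar v v h)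
  have hmemD : ∀ w u : Fin nn, u ∈ barD par hpar w ↔ w ∈ barA par hpar u := by
    intro w u; simp [barD]
  have hself : ∀ w, w ∈ barD par hpar w :=
    fun w => (hmemD w w).2 (Finset.mem_insert_self _ _)
  have hwD : ∀ w, w ∉ strictD par hpar w := by
    intro w hw
    simp only [strictD, Finset.mem_filter] at hw
    exact lt_irrefl w (anc_lt par hpar w w hw.2)
  have hDins : ∀ w, barD par hpar w = insert w (strictD par hpar w) := by
    intro w; ext u
    simp only [barD, strictD, barA, Finset.mem_filter, Finset.mem_univ, true_and,
      Finset.mem_insert]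
    constructor
    · rintro (h | h)
      · exact Or.inl h.symm
      · exact Or.inr h
    · rintro (h | h)
      · exact Or.inl h.symm
      · exact Or.inr h
  set S : Fin nn → ℕ := fun w => ∑ u ∈ barD par hpar w, m u with hSdef
  have hmle : ∀ w, m w ≤ S w :=
    fun w => Finset.single_le_sum (fun _ _ => Nat.zero_le _) (hself w)
  set A : Finset (Fin nn) := insert v (ancestors par hpar v) with hAdef
  have hvA : v ∈ A := Finset.mem_insert_self _ _
  have hS' : ∀ w, ∑ u ∈ barD par hpar w, m' u = S w + (if w ∈ A then 1 else 0) := by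
    intro w
    simp only [m']
    rw [Finset.sum_add_distrib]
    congr 1
    rw [Finset.sum_ite_eq' (barD par hpar w) v (fun _ => 1)]
    have : v ∈ barD par hpar w ↔ w ∈ A := by rw [hmemD w v]; rfl
    simp [this]
  -- strict descendant sums for ancestors
  have hT : ∀ w ∈ ancestors par hpar v, m w + ∑ u ∈ strictD par hpar w, m' u = S w + 1 := by
    intro w hw
    have h1 : ∑ u ∈ barD par hpar w, m' u = S w + 1 := by
      rw [hS' w, if_pos (Finset.mem_insert_of_mem hw)]
    rw [hDins w, Finset.sum_insert (hwD w), hm'ne w (hancne w hw)] at h1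
    exact h1
  -- the γ value
  have hγval : γv m' = ((m v + 1 : ℝ) / (S v + 1)) *
      ∏ w ∈ ancestors par hpar v, (((S w : ℝ) + 1 - m w) / ((S w : ℝ) + 1)) := by
    rw [hγdef]
    congr 1
    · rw [hm'v]
      have : ∑ w' ∈ barD par hpar v, (m' w' : ℝ) = ((S v : ℝ) + 1) := by
        rw [← Nat.cast_sum, hS' v, if_pos hvA]; push_cast; ring
      rw [this]; push_cast; ring
    · refine Finset.prod_congr rfl fun w hw => ?_
      have h1 : ∑ w' ∈ barD par hpar w, (m' w' : ℝ) = ((S w : ℝ) + 1) := by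
        rw [← Nat.cast_sum, hS' w, if_pos (Finset.mem_insert_of_mem hw)]; push_cast; ring
      have h2 : ∑ w' ∈ strictD par hpar w, (m' w' : ℝ) = (S w : ℝ) + 1 - m w := by
        rw [← Nat.cast_sum]
        have := hT w hw
        have : ((m w : ℝ)) + ((∑ u ∈ strictD par hpar w, m' u : ℕ) : ℝ) = (S w : ℝ) + 1 := by
          exact_mod_cast congrArg (Nat.cast : ℕ → ℝ) this
        linarith
      rw [h1, h2]
  -- nonvanishing
  have hπpos : 0 < pitilde m := by
    rw [hpit]
    refine Finset.prod_pos fun w _ => mul_pos (pow_pos (hρ w) _) ?_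
    exact_mod_cast Nat.choose_pos (hmle w)
  have hγpos : 0 < γv m' := by
    rw [hγval]
    refine mul_pos (div_pos (by positivity) (by positivity)) ?_
    refine Finset.prod_pos fun w hw => div_pos ?_ (by positivity)
    have := hmle w
    have : (m w : ℝ) ≤ S w := by exact_mod_cast this
    linarith
  rw [div_eq_div_iff (ne_of_gt hπpos) (ne_of_gt hγpos)]
  -- now the core product identity
  rw [hpit, hpit, hγval]
  -- split products over univ into (univ \ A), v, and ancestors
  have hsub : A ⊆ Finset.univ := Finset.subset_univ A
  rw [← Finset.prod_sdiff hsub, ← Finset.prod_sdiff hsub, hAdef,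
    Finset.prod_insert hvanc, Finset.prod_insert hvanc]
  -- outside A nothing changes
  have hout : ∏ w ∈ Finset.univ \ A, ρ w ^ m' w *
        ((∑ w' ∈ barD par hpar w, m' w').choose (m' w) : ℝ)
      = ∏ w ∈ Finset.univ \ A, ρ w ^ m w * ((S w).choose (m w) : ℝ) := by
    refine Finset.prod_congr rfl fun w hw => ?_
    have hwA : w ∉ A := (Finset.mem_sdiff.1 hw).2
    have hwv : w ≠ v := fun h => hwA (h ▸ hvA)
    rw [hm'ne w hwv, hS' w, if_neg hwA, Nat.add_zero]
  -- v factor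
  have hkeyv : (ρ v ^ m' v * ((∑ w' ∈ barD par hpar v, m' w').choose (m' v) : ℝ)) *
      ((m v + 1 : ℝ) / (S v + 1))
      = ρ v * (ρ v ^ m v * ((S v).choose (m v) : ℝ)) := by
    rw [hm'v, hS' v, if_pos hvA, pow_succ]
    have hnat : (S v + 1) * (S v).choose (m v) = (S v + 1).choose (m v + 1) * (m v + 1) :=
      Nat.add_one_mul_choose_eq (S v) (m v)
    have hcast : ((S v : ℝ) + 1) * ((S v).choose (m v) : ℝ)
        = ((S v + 1).choose (m v + 1) : ℝ) * ((m v : ℝ) + 1) := by exact_mod_cast hnat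
    have hden : (S v : ℝ) + 1 ≠ 0 := by positivity
    field_simp
    push_cast
    linear_combination (-(ρ v ^ m v * ρ v)) * hcast
  -- ancestor factors
  have hkeyw : ∀ w ∈ ancestors par hpar v,
      (ρ w ^ m' w * ((∑ w' ∈ barD par hpar w, m' w').choose (m' w) : ℝ)) *
        (((S w : ℝ) + 1 - m w) / ((S w : ℝ) + 1))
      = ρ w ^ m w * ((S w).choose (m w) : ℝ) := by
    intro w hw
    rw [hm'ne w (hancne w hw), hS' w, if_pos (Finset.mem_insert_of_mem hw)]
    have hnat : (S w).choose (m w) * (S w + 1) = (S w + 1).choose (m w) * (S w + 1 - m w) :=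
      Nat.choose_mul_succ_eq (S w) (m w)
    have hsub' : ((S w + 1 - m w : ℕ) : ℝ) = (S w : ℝ) + 1 - m w := by
      have := hmle w
      push_cast [Nat.sub_add_comm]
      rw [Nat.cast_sub (le_trans this (Nat.le_succ _))]
      push_cast; ring
    have hcast : ((S w).choose (m w) : ℝ) * ((S w : ℝ) + 1)
        = ((S w + 1).choose (m w) : ℝ) * ((S w : ℝ) + 1 - m w) := by
      rw [← hsub']; exact_mod_cast hnat
    have hden : (S w : ℝ) + 1 ≠ 0 := by positivity
    field_simp
    linear_combination (ρ w ^ m w) * hcast.symm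
  -- combine ancestor products
  have hprod : (∏ w ∈ ancestors par hpar v, ρ w ^ m' w *
        ((∑ w' ∈ barD par hpar w, m' w').choose (m' w) : ℝ)) *
      (∏ w ∈ ancestors par hpar v, (((S w : ℝ) + 1 - m w) / ((S w : ℝ) + 1)))
      = ∏ w ∈ ancestors par hpar v, ρ w ^ m w * ((S w).choose (m w) : ℝ) := by
    rw [← Finset.prod_mul_distrib]
    exact Finset.prod_congr rfl hkeyw
  calc (∏ w ∈ Finset.univ \ A, ρ w ^ m' w *
          ((∑ w' ∈ barD par hpar w, m' w').choose (m' w) : ℝ)) *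
        ((ρ v ^ m' v * ((∑ w' ∈ barD par hpar v, m' w').choose (m' v) : ℝ)) *
          ∏ w ∈ ancestors par hpar v, ρ w ^ m' w *
            ((∑ w' ∈ barD par hpar w, m' w').choose (m' w) : ℝ)) *
        (((m v + 1 : ℝ) / (S v + 1)) *
          ∏ w ∈ ancestors par hpar v, (((S w : ℝ) + 1 - m w) / ((S w : ℝ) + 1)))
      = (∏ w ∈ Finset.univ \ A, ρ w ^ m w * ((S w).choose (m w) : ℝ)) *
        (((ρ v ^ m' v * ((∑ w' ∈ barD par hpar v, m' w').choose (m' v) : ℝ)) *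
          ((m v + 1 : ℝ) / (S v + 1))) *
        ((∏ w ∈ ancestors par hpar v, ρ w ^ m' w *
            ((∑ w' ∈ barD par hpar w, m' w').choose (m' w) : ℝ)) *
          ∏ w ∈ ancestors par hpar v, (((S w : ℝ) + 1 - m w) / ((S w : ℝ) + 1)))) := by
        rw [hout]; ring
    _ = ρ v * ((∏ w ∈ Finset.univ \ A, ρ w ^ m w * ((S w).choose (m w) : ℝ)) *
          ((ρ v ^ m v * ((S v).choose (m v) : ℝ)) *
            ∏ w ∈ ancestors par hpar v, ρ w ^ m w * ((S w).choose (m w) : ℝ))) := by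
        rw [hkeyv, hprod]; ring
end

section
/- In the preemptive-resume priority queue of the previous context, the mean numbers E[N_v] satisfy the recursion E[N_v] = (ρ_v + λ_v ∑_{v'>v} E[N_{v'}]/r_{v'}) / (1 − ∑_{v'≥v} ρ_{v'}), and the unique solution of this recursion is E[N_v] = ρ_v (1 + ∑_{v'≥v} ρ_{v'}(r_v/r_{v'} − 1)) / ((1 − ∑_{v'≥v} ρ_{v'})(1 − ∑_{v'>v} ρ_{v'})). -/
open Finset

/-- Transfer a filtered sum over `Fin K` to a sum over `Finset.Ico a K`. -/
lemma pq_sum_filter_val {K a : ℕ} (g : Fin K → ℝ) (g' : ℕ → ℝ)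
    (hg : ∀ w : Fin K, g' w.val = g w) :
    ∑ v' ∈ univ.filter (fun v' : Fin K => a ≤ v'.val), g v' = ∑ i ∈ Finset.Ico a K, g' i := by
  refine Finset.sum_bij' (fun v' _ => (v' : ℕ))
    (fun i hi => ⟨i, (Finset.mem_Ico.mp hi).2⟩) ?_ ?_ ?_ ?_ ?_
  · intro w hw
    simp only [Finset.mem_filter, Finset.mem_univ, true_and] at hw
    exact Finset.mem_Ico.mpr ⟨hw, w.isLt⟩
  · intro i hi
    simp only [Finset.mem_filter, Finset.mem_univ, true_and]
    exact (Finset.mem_Ico.mp hi).1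
  · intro w hw; rfl
  · intro i hi; rfl
  · intro w hw; exact (hg w).symm

/-- Telescoping key lemma over natural indices. -/
lemma pq_key (K : ℕ) (p q : ℕ → ℝ)
    (hS : ∀ n, (1 - ∑ i ∈ Finset.Ico n K, p i) ≠ 0) :
    ∀ j n, K ≤ n + j →
      ∑ i ∈ Finset.Ico n K,
        (q i + p i * (∑ m ∈ Finset.Ico i K, q m) - q i * (∑ m ∈ Finset.Ico i K, p m)) /
          ((1 - ∑ m ∈ Finset.Ico i K, p m) * (1 - ∑ m ∈ Finset.Ico (i + 1) K, p m))
      = (∑ i ∈ Finset.Ico n K, q i) / (1 - ∑ i ∈ Finset.Ico n K, p i) := by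
  intro j
  induction j with
  | zero =>
    intro n hn
    rw [Finset.Ico_eq_empty (by omega)]
    simp
  | succ j ih =>
    intro n hn
    by_cases hK : K ≤ n + j
    · exact ih n hK
    have hnK : n < K := by omega
    have hsplit : ∀ f : ℕ → ℝ,
        ∑ i ∈ Finset.Ico n K, f i = f n + ∑ i ∈ Finset.Ico (n + 1) K, f i :=
      fun f => Finset.sum_eq_sum_Ico_succ_bot hnK f
    rw [hsplit, hsplit q, hsplit p, ih (n + 1) (by omega)]
    have h1 : (1 - (p n + ∑ m ∈ Finset.Ico (n + 1) K, p m)) ≠ 0 := by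
      have := hS n
      rwa [Finset.sum_eq_sum_Ico_succ_bot hnK] at this
    have h2 := hS (n + 1)
    field_simp
    ring

/-- Algebraic form of the priority-queue recursion: the vector
`x_v = ρ_v (1 + ∑_{v' ≥ v} ρ_{v'}(r_v/r_{v'} - 1)) / ((1 - ∑_{v' ≥ v} ρ_{v'})(1 - ∑_{v' > v} ρ_{v'}))`
satisfies `x_v = (ρ_v + λ_v ∑_{v' > v} x_{v'}/r_{v'}) / (1 - ∑_{v' ≥ v} ρ_{v'})` for all `v`,
and it is the unique solution of this recursion. -/
theorem priority_queue_recursion {K : ℕ} (lam r : Fin K → ℝ)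
    (hlam : ∀ v, 0 < lam v) (hr : ∀ v, 0 < r v)
    (hstab : ∑ v, lam v / r v < 1) :
    let ρ : Fin K → ℝ := fun v => lam v / r v
    let x : Fin K → ℝ := fun v =>
      ρ v * (1 + ∑ v' ∈ univ.filter (fun v' => v ≤ v'), ρ v' * (r v / r v' - 1)) /
        ((1 - ∑ v' ∈ univ.filter (fun v' => v ≤ v'), ρ v') *
         (1 - ∑ v' ∈ univ.filter (fun v' => v < v'), ρ v'))
    (∀ v, x v = (ρ v + lam v * ∑ v' ∈ univ.filter (fun v' => v < v'), x v' / r v') /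
        (1 - ∑ v' ∈ univ.filter (fun v' => v ≤ v'), ρ v')) ∧
    (∀ y : Fin K → ℝ,
      (∀ v, y v = (ρ v + lam v * ∑ v' ∈ univ.filter (fun v' => v < v'), y v' / r v') /
        (1 - ∑ v' ∈ univ.filter (fun v' => v ≤ v'), ρ v')) → y = x) := by
  intro ρ x
  have hr0 : ∀ v : Fin K, r v ≠ 0 := fun v => (hr v).ne'
  set p : ℕ → ℝ := fun i => if h : i < K then ρ ⟨i, h⟩ else 0 with hp
  set q : ℕ → ℝ := fun i => if h : i < K then ρ ⟨i, h⟩ / r ⟨i, h⟩ else 0 with hq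
  have hpval : ∀ w : Fin K, p w.val = ρ w := fun w => dif_pos w.isLt
  have hqval : ∀ w : Fin K, q w.val = ρ w / r w := fun w => dif_pos w.isLt
  have hρpos : ∀ w : Fin K, 0 < ρ w := fun w => div_pos (hlam w) (hr w)
  have hppos : ∀ i, 0 ≤ p i := by
    intro i
    by_cases h : i < K
    · rw [hp]; simp only [dif_pos h]; exact (hρpos _).le
    · rw [hp]; simp only [dif_neg h]; exact le_refl 0
  have hS0 : ∑ i ∈ Finset.Ico 0 K, p i < 1 := by
    have : ∑ i ∈ Finset.Ico 0 K, p i = ∑ v : Fin K, ρ v := by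
      rw [show Finset.Ico 0 K = Finset.range K by simp,
        ← Fin.sum_univ_eq_sum_range]
      exact Finset.sum_congr rfl fun w _ => hpval w
    rw [this]; exact hstab
  have hS : ∀ n, (1 - ∑ i ∈ Finset.Ico n K, p i) ≠ 0 := by
    intro n
    have hle : ∑ i ∈ Finset.Ico n K, p i ≤ ∑ i ∈ Finset.Ico 0 K, p i :=
      Finset.sum_le_sum_of_subset_of_nonneg
        (Finset.Ico_subset_Ico (Nat.zero_le n) le_rfl) (fun i _ _ => hppos i)
    have : ∑ i ∈ Finset.Ico n K, p i < 1 := lt_of_le_of_lt hle hS0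
    exact sub_ne_zero.mpr (ne_of_lt this).symm
  -- transfer lemmas
  have hcle : ∀ (v : Fin K) (g : Fin K → ℝ) (g' : ℕ → ℝ), (∀ w, g' w.val = g w) →
      ∑ v' ∈ univ.filter (fun v' => v ≤ v'), g v' = ∑ i ∈ Finset.Ico v.val K, g' i := by
    intro v g g' hg
    rw [← pq_sum_filter_val g g' hg]
    refine Finset.sum_congr ?_ (fun _ _ => rfl)
    apply Finset.filter_congr
    intro w _
    simp only [eq_iff_iff, Fin.le_def]
  have hclt : ∀ (v : Fin K) (g : Fin K → ℝ) (g' : ℕ → ℝ), (∀ w, g' w.val = g w) →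
      ∑ v' ∈ univ.filter (fun v' => v < v'), g v' = ∑ i ∈ Finset.Ico (v.val + 1) K, g' i := by
    intro v g g' hg
    rw [← pq_sum_filter_val g g' hg]
    refine Finset.sum_congr ?_ (fun _ _ => rfl)
    apply Finset.filter_congr
    intro w _
    simp only [eq_iff_iff, Fin.lt_def]
    omega
  -- explicit form of x
  have hxform : ∀ u : Fin K, x u =
      ρ u * (1 + (r u * (∑ m ∈ Finset.Ico u.val K, q m) - ∑ m ∈ Finset.Ico u.val K, p m)) /
        ((1 - ∑ m ∈ Finset.Ico u.val K, p m) * (1 - ∑ m ∈ Finset.Ico (u.val + 1) K, p m)) := by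
    intro u
    show ρ u * (1 + ∑ v' ∈ univ.filter (fun v' => u ≤ v'), ρ v' * (r u / r v' - 1)) /
        ((1 - ∑ v' ∈ univ.filter (fun v' => u ≤ v'), ρ v') *
         (1 - ∑ v' ∈ univ.filter (fun v' => u < v'), ρ v')) = _
    rw [hcle u (fun v' => ρ v' * (r u / r v' - 1)) (fun i => r u * q i - p i) ?_,
      hcle u ρ p hpval, hclt u ρ p hpval, Finset.sum_sub_distrib, ← Finset.mul_sum]
    intro w
    show r u * q w.val - p w.val = ρ w * (r u / r w - 1)
    rw [hpval w, hqval w]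
    field_simp [hr0 w]
  -- per-index identity x u / r u = summand of the key lemma
  have hx : ∀ u : Fin K, x u / r u =
      (q u.val + p u.val * (∑ m ∈ Finset.Ico u.val K, q m)
          - q u.val * (∑ m ∈ Finset.Ico u.val K, p m)) /
        ((1 - ∑ m ∈ Finset.Ico u.val K, p m) * (1 - ∑ m ∈ Finset.Ico (u.val + 1) K, p m)) := by
    intro u
    rw [hxform u, hpval u, hqval u]
    have h1 := hS u.val
    have h2 := hS (u.val + 1)
    field_simp [hr0 u]
    ring
  -- the sum over larger indices
  have hA : ∀ v : Fin K, ∑ v' ∈ univ.filter (fun v' => v < v'), x v' / r v' =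
      (∑ i ∈ Finset.Ico (v.val + 1) K, q i) / (1 - ∑ i ∈ Finset.Ico (v.val + 1) K, p i) := by
    intro v
    rw [hclt v (fun v' => x v' / r v')
      (fun i => (q i + p i * (∑ m ∈ Finset.Ico i K, q m) - q i * (∑ m ∈ Finset.Ico i K, p m)) /
        ((1 - ∑ m ∈ Finset.Ico i K, p m) * (1 - ∑ m ∈ Finset.Ico (i + 1) K, p m)))
      (fun w => (hx w).symm)]
    exact pq_key K p q hS K (v.val + 1) (by omega)
  -- Part 1: the recursion holds
  have hrec : ∀ v : Fin K, x v =
      (ρ v + lam v * ∑ v' ∈ univ.filter (fun v' => v < v'), x v' / r v') /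
        (1 - ∑ v' ∈ univ.filter (fun v' => v ≤ v'), ρ v') := by
    intro v
    rw [hxform v, hA v, hcle v ρ p hpval,
      Finset.sum_eq_sum_Ico_succ_bot v.isLt p, Finset.sum_eq_sum_Ico_succ_bot v.isLt q,
      hpval v, hqval v]
    have h1 := hS v.val
    rw [Finset.sum_eq_sum_Ico_succ_bot v.isLt p, hpval v] at h1
    have h2 := hS (v.val + 1)
    have hlr : ρ v * r v = lam v := div_mul_cancel₀ (lam v) (hr0 v)
    rw [← hlr]
    field_simp [hr0 v]
    ring
  refine ⟨hrec, ?_⟩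
  -- Part 2: uniqueness
  intro y hy
  funext v
  suffices h : ∀ j (v : Fin K), K ≤ v.val + j → y v = x v from h K v (by omega)
  intro j
  induction j with
  | zero => intro v hv; exact absurd v.isLt (by omega)
  | succ j ih =>
    intro v hv
    rw [hy v, hrec v]
    have : ∑ v' ∈ univ.filter (fun v' => v < v'), y v' / r v'
        = ∑ v' ∈ univ.filter (fun v' => v < v'), x v' / r v' := by
      refine Finset.sum_congr rfl fun w hw => ?_
      simp only [Finset.mem_filter, Finset.mem_univ, true_and] at hw
      have : K ≤ w.val + j := by
        have := hw
        rw [Fin.lt_def] at this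
        omega
      rw [ih w this]
    rw [this]
end

section
/- Let G=(V,E) be a finite rooted tree and s ∈ {1,…,ξ}^V circuit requirements with ξ ≥ 1 an integer. Define N = { n ∈ ℕ^V : ∑_{v'∈Ā(v)} n_{v'} s_{v'} ≤ ξ for all v ∈ V }, and for v ∈ V and 0 ≤ σ ≤ ξ define M(σ,v) = { n ∈ ℕ^V : ∑_{v''∈Ā(v')} n_{v''} s_{v''} ≤ σ for all v' ∈ V, and n_{v'} = 0 for all v' ∉ D̄(v) }. Then for ρ ∈ (0,∞)^V the partial sums c_v(σ) = ∑_{n∈M(σ,v)} ∏_{v'∈D̄(v)} ρ_{v'}^{n_{v'}}/n_{v'}! satisfy the recursion c_v(σ) = ∑_{ℓ=0}^{⌊σ/s_v⌋} (ρ_v^ℓ/ℓ!) · ∏_{v':(v,v')∈E} c_{v'}(σ − ℓ s_v), with c_v(σ) = ∑_{ℓ=0}^{⌊σ/s_v⌋} ρ_v^ℓ/ℓ! when v is a leaf. -/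
open Finset

/-
Write `c_v(σ)` as a weighted count of occupancy vectors supported on the subtree `D̄(v)` whose
cost along every root path `Ā(w)` is at most `σ`. The vertex `v` lies on every root path that
meets its subtree, so fixing its occupancy `ℓ` leaves exactly the budget `σ - ℓ s_v` for the rest
of the subtree (`partitionFn_insert`). The rest is the disjoint union of the children's subtrees,
and no root path meets two of them, so the constraints decouple and the count factors into the
children's counts (`partitionFn_biUnion`).
-/

namespace PathBudget

variable {α : Type*} (P : α → Finset α) (s : α → ℕ)

/-- `P w` plays the role of the root path `Ā(w)` and `s x` of the cost of one unit at `x`. -/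
def IsFeasible (σ : ℕ) (D : Finset α) (m : α → ℕ) : Prop :=
  (∀ w, ∑ x ∈ P w, m x * s x ≤ σ) ∧ ∀ x, x ∉ D → m x = 0

def Separated (D₁ D₂ : Finset α) : Prop :=
  ∀ w, Disjoint (P w) D₁ ∨ Disjoint (P w) D₂

variable {P s} {σ : ℕ} {D D₁ D₂ : Finset α} {m m₁ m₂ : α → ℕ}

theorem sum_mul_eq_zero_of_disjoint {A : Finset α} (hA : Disjoint A D)
    (hm : ∀ x, x ∉ D → m x = 0) : ∑ x ∈ A, m x * s x = 0 :=
  sum_eq_zero fun x hx => by rw [hm x (disjoint_left.1 hA hx), zero_mul]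

theorem IsFeasible.mul_le (hP : ∀ x, x ∈ P x) (hm : IsFeasible P s σ D m) (x : α) :
    m x * s x ≤ σ :=
  (single_le_sum (f := fun y => m y * s y) (fun _ _ => Nat.zero_le _) (hP x)).trans (hm.1 x)

theorem isFeasible_empty_iff : IsFeasible P s σ ∅ m ↔ m = 0 := by
  refine ⟨fun hm => funext fun x => hm.2 x (notMem_empty x), ?_⟩
  rintro rfl
  simp [IsFeasible]

theorem IsFeasible.indicator (hm : IsFeasible P s σ D m) (D' : Finset α) :
    IsFeasible P s σ D' ((D' : Set α).indicator m) :=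
  ⟨fun w => (sum_le_sum fun x _ => Nat.mul_le_mul_right _ (Set.indicator_le_self _ _ x)).trans
    (hm.1 w), fun _ hx => Set.indicator_of_notMem (mem_coe.not.2 hx) _⟩

theorem IsFeasible.add [DecidableEq α] (h₁ : IsFeasible P s σ D₁ m₁)
    (h₂ : IsFeasible P s σ D₂ m₂) (hsep : Separated P D₁ D₂) :
    IsFeasible P s σ (D₁ ∪ D₂) (m₁ + m₂) := by
  refine ⟨fun w => ?_, fun x hx => ?_⟩
  · simp only [Pi.add_apply, add_mul, sum_add_distrib]
    rcases hsep w with hw | hw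
    · rw [sum_mul_eq_zero_of_disjoint hw h₁.2, zero_add]; exact h₂.1 w
    · rw [sum_mul_eq_zero_of_disjoint hw h₂.2, add_zero]; exact h₁.1 w
  · rw [mem_union, not_or] at hx
    simp [h₁.2 x hx.1, h₂.2 x hx.2]

theorem Separated.disjoint (hP : ∀ x, x ∈ P x) (hsep : Separated P D₁ D₂) : Disjoint D₁ D₂ :=
  disjoint_left.2 fun x h₁ h₂ =>
    (hsep x).elim (disjoint_left.1 · (hP x) h₁) (disjoint_left.1 · (hP x) h₂)

theorem indicator_add_eq_left (hdisj : Disjoint D₁ D₂) (h₁ : ∀ x, x ∉ D₁ → m₁ x = 0)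
    (h₂ : ∀ x, x ∉ D₂ → m₂ x = 0) : (D₁ : Set α).indicator (m₁ + m₂) = m₁ := by
  ext x
  by_cases hx : x ∈ D₁
  · simp [hx, h₂ x (disjoint_left.1 hdisj hx)]
  · simp [hx, h₁ x hx]

theorem Separated.biUnion_right {ι : Type*} [DecidableEq α] {C : Finset ι} {g : ι → Finset α}
    (hsep : ∀ i ∈ C, Separated P D (g i)) : Separated P D (C.biUnion g) := fun w =>
  (em (Disjoint (P w) D)).imp_right fun hw =>
    (disjoint_biUnion_right _ _ _).2 fun i hi => (hsep i hi w).resolve_left hw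

theorem sum_mul_eq_sum_update_add [DecidableEq α] (A : Finset α) (m : α → ℕ) (v : α) :
    ∑ x ∈ A, m x * s x =
      ∑ x ∈ A, Function.update m v 0 x * s x + if v ∈ A then m v * s v else 0 := by
  rw [← sum_ite_eq' A v (fun x => m x * s x), ← sum_add_distrib]
  refine sum_congr rfl fun x _ => ?_
  rcases eq_or_ne x v with rfl | hx
  · simp
  · simp [hx]

theorem isFeasible_insert_iff [DecidableEq α] {v : α} (hvP : v ∈ P v) (hv : v ∉ D)
    (hanc : ∀ x ∈ D, ∀ w, x ∈ P w → v ∈ P w) :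
    IsFeasible P s σ (insert v D) m ↔
      m v * s v ≤ σ ∧ IsFeasible P s (σ - m v * s v) D (Function.update m v 0) := by
  have hsplit := fun w => sum_mul_eq_sum_update_add (s := s) (P w) m v
  constructor
  · rintro ⟨hpath, hsupp⟩
    have hsupp' : ∀ x, x ∉ D → Function.update m v 0 x = 0 := by
      intro x hx
      rcases eq_or_ne x v with rfl | hxv
      · simp
      · rw [Function.update_of_ne hxv]
        exact hsupp x (by simp [hxv, hx])
    have hmv := hpath v
    rw [hsplit, if_pos hvP] at hmv
    refine ⟨by omega, fun w => ?_, hsupp'⟩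
    by_cases hw : v ∈ P w
    · have := hpath w
      rw [hsplit, if_pos hw] at this
      omega
    · rw [sum_mul_eq_zero_of_disjoint (disjoint_left.2 fun x hx hxD => hw (hanc x hxD w hx)) hsupp']
      exact Nat.zero_le _
  · rintro ⟨hmv, hpath, hsupp⟩
    refine ⟨fun w => ?_, fun x hx => ?_⟩
    · have := hpath w
      rw [hsplit]
      split_ifs <;> omega
    · rw [mem_insert, not_or] at hx
      simpa [Function.update_of_ne hx.1] using hsupp x hx.2

section Sums

variable [Fintype α] [DecidableEq α] {R : Type*} [CommSemiring R]

variable (P s) in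
open Classical in
/-- The box `range (σ + 1)` only makes the set finite, see `mem_configs`. -/
noncomputable def configs (σ : ℕ) (D : Finset α) : Finset (α → ℕ) :=
  (Fintype.piFinset fun _ => range (σ + 1)).filter (IsFeasible P s σ D)

variable (P s) in
noncomputable def partitionFn (f : α → ℕ → R) (σ : ℕ) (D : Finset α) : R :=
  ∑ m ∈ configs P s σ D, ∏ x ∈ D, f x (m x)

variable {f : α → ℕ → R}

theorem mem_configs (hP : ∀ x, x ∈ P x) (hs : ∀ x, 0 < s x) :
    m ∈ configs P s σ D ↔ IsFeasible P s σ D m := by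
  simp only [configs, mem_filter, Fintype.mem_piFinset, mem_range, and_iff_right_iff_imp]
  exact fun hm x => Nat.lt_succ_of_le ((Nat.le_mul_of_pos_right _ (hs x)).trans (hm.mul_le hP x))

theorem partitionFn_empty (hP : ∀ x, x ∈ P x) (hs : ∀ x, 0 < s x) :
    partitionFn P s f σ ∅ = 1 := by
  have : configs P s σ ∅ = {0} := by
    ext m
    rw [mem_configs hP hs, isFeasible_empty_iff, mem_singleton]
  rw [partitionFn, this, sum_singleton, prod_empty]

theorem partitionFn_union (hP : ∀ x, x ∈ P x) (hs : ∀ x, 0 < s x) (hsep : Separated P D₁ D₂) :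
    partitionFn P s f σ (D₁ ∪ D₂) = partitionFn P s f σ D₁ * partitionFn P s f σ D₂ := by
  have hdisj := hsep.disjoint hP
  rw [partitionFn, partitionFn, partitionFn, sum_mul_sum, ← sum_product']
  refine sum_nbij' (fun m => ((D₁ : Set α).indicator m, (D₂ : Set α).indicator m))
    (fun p => p.1 + p.2) ?_ ?_ ?_ ?_ ?_
  · intro m hm
    simp only [mem_product, mem_configs hP hs] at hm ⊢
    exact ⟨hm.indicator D₁, hm.indicator D₂⟩
  · rintro ⟨m₁, m₂⟩ hm
    simp only [mem_product, mem_configs hP hs] at hm ⊢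
    exact hm.1.add hm.2 hsep
  · intro m hm
    rw [mem_configs hP hs] at hm
    rw [Pi.add_def, ← Set.indicator_union_of_disjoint (disjoint_coe.2 hdisj), ← coe_union,
      Set.indicator_eq_self]
    exact fun x hx => by_contra fun h => hx (hm.2 x h)
  · rintro ⟨m₁, m₂⟩ hm
    simp only [mem_product, mem_configs hP hs] at hm
    rw [indicator_add_eq_left hdisj hm.1.2 hm.2.2, add_comm,
      indicator_add_eq_left hdisj.symm hm.2.2 hm.1.2]
  · intro m _
    rw [prod_union hdisj]
    congr 1 <;> exact prod_congr rfl fun x hx => by simp [hx]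

theorem partitionFn_biUnion {ι : Type*} [DecidableEq ι] (hP : ∀ x, x ∈ P x) (hs : ∀ x, 0 < s x)
    (C : Finset ι) (g : ι → Finset α)
    (hsep : (C : Set ι).Pairwise fun i j => Separated P (g i) (g j)) :
    partitionFn P s f σ (C.biUnion g) = ∏ i ∈ C, partitionFn P s f σ (g i) := by
  induction C using Finset.induction_on with
  | empty => rw [biUnion_empty, prod_empty, partitionFn_empty hP hs]
  | insert i C hi ih =>
    have hsep_i : Separated P (g i) (C.biUnion g) := Separated.biUnion_right fun j hj =>
      hsep (mem_insert_self i C) (mem_insert_of_mem hj) (ne_of_mem_of_not_mem hj hi).symm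
    rw [biUnion_insert, prod_insert hi, partitionFn_union hP hs hsep_i,
      ih (hsep.mono (coe_subset.2 (subset_insert i C)))]

theorem partitionFn_insert (hP : ∀ x, x ∈ P x) (hs : ∀ x, 0 < s x) {v : α} (hv : v ∉ D)
    (hanc : ∀ x ∈ D, ∀ w, x ∈ P w → v ∈ P w) :
    partitionFn P s f σ (insert v D) =
      ∑ ℓ ∈ range (σ / s v + 1), f v ℓ * partitionFn P s f (σ - ℓ * s v) D := by
  simp_rw [partitionFn, mul_sum]
  rw [sum_sigma']
  refine sum_nbij' (fun m => ⟨m v, Function.update m v 0⟩) (fun p => Function.update p.2 v p.1)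
    ?_ ?_ ?_ ?_ ?_
  · intro m hm
    rw [mem_configs hP hs, isFeasible_insert_iff (hP v) hv hanc] at hm
    rw [mem_sigma, mem_range, Nat.lt_succ_iff, Nat.le_div_iff_mul_le (hs v), mem_configs hP hs]
    exact hm
  · rintro ⟨ℓ, m'⟩ hm
    rw [mem_sigma, mem_range, Nat.lt_succ_iff, Nat.le_div_iff_mul_le (hs v),
      mem_configs hP hs] at hm
    have hm'v : m' v = 0 := hm.2.2 v hv
    rw [mem_configs hP hs, isFeasible_insert_iff (hP v) hv hanc]
    simpa [Function.update_eq_self_iff (f := m') (a := v) |>.2 hm'v.symm] using hm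
  · intro m _
    simp
  · rintro ⟨ℓ, m'⟩ hm
    rw [mem_sigma, mem_configs hP hs] at hm
    have hm'v : m' v = 0 := hm.2.2 v hv
    simp [Function.update_eq_self_iff (f := m') (a := v) |>.2 hm'v.symm]
  · intro m _
    rw [prod_insert hv]
    exact congrArg _ (prod_congr rfl fun x hx => by
      simp [Function.update_of_ne (ne_of_mem_of_not_mem hx hv)])

/-- Stated for any predicate equivalent to `IsFeasible`, so that it applies whatever `Decidable`
instance the `if` carries. -/
theorem tsum_ite_eq_partitionFn [TopologicalSpace R] (hP : ∀ x, x ∈ P x) (hs : ∀ x, 0 < s x)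
    {p : (α → ℕ) → Prop} [DecidablePred p] (hp : ∀ m, p m ↔ IsFeasible P s σ D m) :
    ∑' m, (if p m then ∏ x ∈ D, f x (m x) else 0) = partitionFn P s f σ D :=
  (tsum_eq_sum fun m hm => if_neg fun h => hm ((mem_configs hP hs).2 ((hp m).1 h))).trans
    (sum_congr rfl fun m hm => if_pos ((hp m).2 ((mem_configs hP hs).1 hm)))

end Sums

end PathBudget

section Tree

variable {n : ℕ} [NeZero n] {par : Fin n → Fin n}

theorem mem_children {v c : Fin n} : c ∈ children par v ↔ c ≠ 0 ∧ par c = v := by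
  simp [children]

theorem par_induction (hpar : ∀ v, v ≠ 0 → par v < v) {motive : Fin n → Prop} (zero : motive 0)
    (step : ∀ v, v ≠ 0 → motive (par v) → motive v) (v : Fin n) : motive v := by
  induction v using WellFounded.induction (wellFounded_lt (α := Fin n)) with
  | _ v ih =>
    by_cases hv : v = 0
    · exact hv ▸ zero
    · exact step v hv (ih _ (hpar v hv))

variable (hpar : ∀ v, v ≠ 0 → par v < v)

theorem barA_zero : barA par hpar 0 = {0} := by
  rw [barA, ancestors, dif_pos rfl]; rfl

theorem barA_of_ne_zero {v : Fin n} (hv : v ≠ 0) :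
    barA par hpar v = insert v (barA par hpar (par v)) := by
  rw [barA, ancestors, dif_neg hv]; rfl

theorem mem_barA_self (v : Fin n) : v ∈ barA par hpar v := mem_insert_self _ _

theorem par_mem_barA {v : Fin n} (hv : v ≠ 0) : par v ∈ barA par hpar v := by
  rw [barA_of_ne_zero hpar hv]
  exact mem_insert_of_mem (mem_barA_self hpar _)

theorem le_of_mem_barA {x v : Fin n} (hx : x ∈ barA par hpar v) : x ≤ v := by
  induction v using par_induction hpar with
  | zero => simp_all [barA_zero]
  | step v hv ih =>
    rw [barA_of_ne_zero hpar hv, mem_insert] at hx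
    exact hx.elim (·.le) fun hx => (ih hx).trans (hpar v hv).le

theorem notMem_barA_par {v : Fin n} (hv : v ≠ 0) : v ∉ barA par hpar (par v) :=
  fun h => (le_of_mem_barA hpar h).not_gt (hpar v hv)

theorem barA_subset_of_mem {x v : Fin n} (hx : x ∈ barA par hpar v) :
    barA par hpar x ⊆ barA par hpar v := by
  induction v using par_induction hpar with
  | zero => simp_all [barA_zero]
  | step v hv ih =>
    rw [barA_of_ne_zero hpar hv, mem_insert] at hx
    rcases hx with rfl | hx
    · exact Subset.rfl
    · exact (ih hx).trans (barA_of_ne_zero hpar hv ▸ subset_insert _ _)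

theorem mem_barA_or_mem_barA {x y w : Fin n} (hx : x ∈ barA par hpar w)
    (hy : y ∈ barA par hpar w) : x ∈ barA par hpar y ∨ y ∈ barA par hpar x := by
  induction w using par_induction hpar with
  | zero => simp_all [barA_zero]
  | step w hw ih =>
    rw [barA_of_ne_zero hpar hw] at hx hy
    rcases mem_insert.1 hx with rfl | hx'
    · exact .inr (barA_of_ne_zero hpar hw ▸ hy)
    rcases mem_insert.1 hy with rfl | hy'
    · exact .inl (barA_of_ne_zero hpar hw ▸ hx)
    exact ih hx' hy'

theorem mem_barD {v w : Fin n} : w ∈ barD par hpar v ↔ v ∈ barA par hpar w := by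
  simp [barD]

theorem disjoint_barA_barD {v w : Fin n} :
    Disjoint (barA par hpar w) (barD par hpar v) ↔ v ∉ barA par hpar w := by
  simp only [disjoint_left, mem_barD hpar]
  exact ⟨fun h hv => h hv (mem_barA_self hpar v),
    fun hv x hx hvx => hv (barA_subset_of_mem hpar hx hvx)⟩

theorem exists_mem_children_mem_barA {v w : Fin n} (hvw : v ∈ barA par hpar w) (hne : w ≠ v) :
    ∃ c ∈ children par v, c ∈ barA par hpar w := by
  induction w using par_induction hpar with
  | zero => simp_all [barA_zero]
  | step w hw ih =>
    rw [barA_of_ne_zero hpar hw, mem_insert] at hvw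
    have hvw := hvw.resolve_left hne.symm
    by_cases hpw : par w = v
    · exact ⟨w, mem_children.2 ⟨hw, hpw⟩, mem_barA_self hpar w⟩
    · obtain ⟨c, hc, hcw⟩ := ih hvw hpw
      exact ⟨c, hc, barA_of_ne_zero hpar hw ▸ mem_insert_of_mem hcw⟩

theorem barD_eq_insert_biUnion_children (v : Fin n) :
    barD par hpar v = insert v ((children par v).biUnion (barD par hpar)) := by
  ext w
  simp only [mem_insert, mem_biUnion, mem_barD hpar]
  constructor
  · intro hvw
    by_cases hwv : w = v
    · exact .inl hwv
    · exact .inr (exists_mem_children_mem_barA hpar hvw hwv)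
  · rintro (rfl | ⟨c, hc, hcw⟩)
    · exact mem_barA_self hpar w
    · obtain ⟨hc0, rfl⟩ := mem_children.1 hc
      exact barA_subset_of_mem hpar hcw (par_mem_barA hpar hc0)

theorem notMem_biUnion_children (v : Fin n) :
    v ∉ (children par v).biUnion (barD par hpar) := by
  simp only [mem_biUnion, mem_barD hpar, mem_children, not_exists, not_and]
  rintro c ⟨hc0, rfl⟩
  exact notMem_barA_par hpar hc0

theorem eq_of_mem_barA_of_par_eq {c₁ c₂ : Fin n} (h₁ : c₁ ≠ 0) (h₂ : c₂ ≠ 0)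
    (hpar₁₂ : par c₁ = par c₂) (h : c₁ ∈ barA par hpar c₂) : c₁ = c₂ := by
  rw [barA_of_ne_zero hpar h₂, mem_insert, ← hpar₁₂] at h
  exact h.resolve_right (notMem_barA_par hpar h₁)

theorem mem_barA_of_mem_biUnion_children {v x w : Fin n}
    (hx : x ∈ (children par v).biUnion (barD par hpar)) (hw : x ∈ barA par hpar w) :
    v ∈ barA par hpar w := by
  have hxv : x ∈ barD par hpar v :=
    barD_eq_insert_biUnion_children hpar v ▸ mem_insert_of_mem hx
  exact barA_subset_of_mem hpar hw ((mem_barD hpar).1 hxv)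

theorem separated_barD_children (v : Fin n) :
    ((children par v : Set (Fin n))).Pairwise
      fun c₁ c₂ => PathBudget.Separated (barA par hpar) (barD par hpar c₁) (barD par hpar c₂) := by
  intro c₁ hc₁ c₂ hc₂ hne w
  obtain ⟨h₁, hpar₁⟩ := mem_children.1 hc₁
  obtain ⟨h₂, hpar₂⟩ := mem_children.1 hc₂
  simp only [disjoint_barA_barD hpar, ← not_and_or]
  rintro ⟨hw₁, hw₂⟩
  rcases mem_barA_or_mem_barA hpar hw₁ hw₂ with h | h
  · exact hne (eq_of_mem_barA_of_par_eq hpar h₁ h₂ (hpar₁.trans hpar₂.symm) h)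
  · exact hne (eq_of_mem_barA_of_par_eq hpar h₂ h₁ (hpar₂.trans hpar₁.symm) h).symm

end Tree

theorem streaming_partial_sum_recursion_general {n : ℕ} [NeZero n] (par : Fin n → Fin n)
    (hpar : ∀ v, v ≠ 0 → par v < v) (ξ : ℕ) (s : Fin n → ℕ)
    (hs : ∀ v, 1 ≤ s v ∧ s v ≤ ξ) (ρ : Fin n → ℝ) :
    let c : Fin n → ℕ → ℝ := fun v σ =>
      ∑' m : Fin n → ℕ,
        if (∀ v', ∑ v'' ∈ barA par hpar v', m v'' * s v'' ≤ σ) ∧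
            (∀ v', v' ∉ barD par hpar v → m v' = 0)
          then ∏ v' ∈ barD par hpar v, ρ v' ^ m v' / ((m v').factorial : ℝ) else 0
    (∀ v : Fin n, ∀ σ ≤ ξ,
      c v σ = ∑ ℓ ∈ Finset.range (σ / s v + 1),
        ρ v ^ ℓ / (ℓ.factorial : ℝ) * ∏ v' ∈ children par v, c v' (σ - ℓ * s v)) ∧
    (∀ v : Fin n, ∀ σ ≤ ξ, children par v = ∅ →
      c v σ = ∑ ℓ ∈ Finset.range (σ / s v + 1), ρ v ^ ℓ / (ℓ.factorial : ℝ)) := by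
  intro c
  have hP := mem_barA_self hpar
  have hs₀ : ∀ v, 0 < s v := fun v => (hs v).1
  have hc : ∀ v σ, c v σ = PathBudget.partitionFn (barA par hpar) s
      (fun x ℓ => ρ x ^ ℓ / (ℓ.factorial : ℝ)) σ (barD par hpar v) :=
    fun _ _ => by
      refine PathBudget.tsum_ite_eq_partitionFn (f := fun x ℓ => ρ x ^ ℓ / (ℓ.factorial : ℝ))
        hP hs₀ ?_
      exact fun _ => Iff.rfl
  have hrec : ∀ v σ, c v σ = ∑ ℓ ∈ Finset.range (σ / s v + 1),
      ρ v ^ ℓ / (ℓ.factorial : ℝ) * ∏ v' ∈ children par v, c v' (σ - ℓ * s v) := by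
    intro v σ
    rw [hc, barD_eq_insert_biUnion_children hpar, PathBudget.partitionFn_insert hP hs₀
      (notMem_biUnion_children hpar v) fun _ hx _ => mem_barA_of_mem_biUnion_children hpar hx]
    refine sum_congr rfl fun ℓ _ => ?_
    rw [PathBudget.partitionFn_biUnion hP hs₀ _ _ (separated_barD_children hpar v)]
    simp only [hc]
  exact ⟨fun v σ _ => hrec v σ, fun v σ _ hleaf => by simp [hrec v σ, hleaf]⟩

/-- Kaufman–Roberts-type recursion for the streaming normalization constants: with
`c_v(σ) = ∑_{m ∈ M(σ,v)} ∏_{v' ∈ D̄(v)} ρ_{v'}^{m_{v'}}/m_{v'}!`, one has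
`c_v(σ) = ∑_{ℓ=0}^{⌊σ/s_v⌋} (ρ_v^ℓ/ℓ!) ∏_{v' child of v} c_{v'}(σ - ℓ s_v)`,
and `c_v(σ) = ∑_{ℓ=0}^{⌊σ/s_v⌋} ρ_v^ℓ/ℓ!` when `v` is a leaf. -/
theorem streaming_partial_sum_recursion {n : ℕ} [NeZero n] (par : Fin n → Fin n)
    (hpar : ∀ v, v ≠ 0 → par v < v) (ξ : ℕ) (hξ : 1 ≤ ξ) (s : Fin n → ℕ)
    (hs : ∀ v, 1 ≤ s v ∧ s v ≤ ξ) (ρ : Fin n → ℝ) (hρ : ∀ v, 0 < ρ v) :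
    let c : Fin n → ℕ → ℝ := fun v σ =>
      ∑' m : Fin n → ℕ,
        if (∀ v', ∑ v'' ∈ barA par hpar v', m v'' * s v'' ≤ σ) ∧
            (∀ v', v' ∉ barD par hpar v → m v' = 0)
          then ∏ v' ∈ barD par hpar v, ρ v' ^ m v' / ((m v').factorial : ℝ) else 0
    (∀ v : Fin n, ∀ σ ≤ ξ,
      c v σ = ∑ ℓ ∈ Finset.range (σ / s v + 1),
        ρ v ^ ℓ / (ℓ.factorial : ℝ) * ∏ v' ∈ children par v, c v' (σ - ℓ * s v)) ∧
    (∀ v : Fin n, ∀ σ ≤ ξ, children par v = ∅ →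
      c v σ = ∑ ℓ ∈ Finset.range (σ / s v + 1), ρ v ^ ℓ / (ℓ.factorial : ℝ)) :=
  streaming_partial_sum_recursion_general par hpar ξ s hs ρ
end
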